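/- For every integer a ≥ 2 and every real x ∈ (1 − 2^{1−a}, 1 − 2^{-a}], the relative toll satisfies (ν(x) − x·log₂(1/x))/x < 2 − (1−x)·(a − 2 + 1/ln 2). -/

import Mathlib

noncomputable def epsBit (d : ℕ) (x : ℝ) : ℝ := ((⌊2 ^ d * x⌋ % 2 : ℤ) : ℝ)

noncomputable def nu (x : ℝ) : ℝ := ∑' d : ℕ, (d : ℝ) * epsBit d x / 2 ^ d

/-! On `(1 - 2^(1-a), 1 - 2^(-a)]` the binary digits `ε_1, …, ε_(a-1)` are all `1`. Comparing
`2 - ν(x) = ∑_{d ≥ 1} d (1 - ε_d) 2^(-d)` termwise with `1 - x = ∑_{d ≥ 1} (1 - ε_d) 2^(-d)`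
therefore gives `ν(x) ≤ 2 - a (1 - x)`. With `x log₂(1/x) > x (1 - x) / ln 2` (from `ln x < x - 1`)
the claim reduces to `(a - 2)(1 - x)² ≥ 0`. -/

open Filter Topology

lemma hasSum_succ_div_two_pow_succ : HasSum (fun d : ℕ => ((d : ℝ) + 1) / 2 ^ (d + 1)) 2 := by
  have h := hasSum_coe_mul_geometric_of_norm_lt_one (𝕜 := ℝ) (r := 1 / 2) (by norm_num)
  rw [← hasSum_nat_add_iff' 1] at h
  norm_num at h
  simpa only [one_div_pow, mul_one_div] using h

lemma hasSum_one_div_two_pow_succ : HasSum (fun d : ℕ => (1 : ℝ) / 2 ^ (d + 1)) 1 := by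
  convert hasSum_geometric_two' 1 using 2 with d
  ring

section BinaryDigits

variable (x : ℝ)

lemma epsBit_eq_zero_or_one (d : ℕ) : epsBit d x = 0 ∨ epsBit d x = 1 := by
  rcases Int.emod_two_eq ⌊2 ^ d * x⌋ with h | h <;> simp [epsBit, h]

lemma epsBit_nonneg (d : ℕ) : 0 ≤ epsBit d x := by
  rcases epsBit_eq_zero_or_one x d with h | h <;> simp [h]

lemma epsBit_le_one (d : ℕ) : epsBit d x ≤ 1 := by
  rcases epsBit_eq_zero_or_one x d with h | h <;> simp [h]

lemma floor_two_pow_succ_mul (d : ℕ) :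
    (⌊2 ^ (d + 1) * x⌋ : ℝ) = 2 * ⌊2 ^ d * x⌋ + epsBit (d + 1) x := by
  set y := 2 ^ d * x
  have hy : (2 : ℝ) ^ (d + 1) * x = 2 * y := by ring
  have lower : 2 * ⌊y⌋ ≤ ⌊2 * y⌋ := by
    rw [Int.le_floor]; push_cast; linarith [Int.floor_le y]
  have upper : ⌊2 * y⌋ < 2 * ⌊y⌋ + 2 := by
    rw [Int.floor_lt]; push_cast; linarith [Int.lt_floor_add_one y]
  have hdigit : ⌊2 * y⌋ = 2 * ⌊y⌋ + ⌊2 * y⌋ % 2 := by omega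
  rw [epsBit, hy]
  exact_mod_cast hdigit

lemma sum_range_epsBit_succ (N : ℕ) :
    ∑ d ∈ Finset.range N, epsBit (d + 1) x / 2 ^ (d + 1) = ⌊2 ^ N * x⌋ / 2 ^ N - ⌊x⌋ := by
  induction N with
  | zero => simp
  | succ N ih =>
    rw [Finset.sum_range_succ, ih, floor_two_pow_succ_mul]
    field_simp
    ring

lemma tendsto_floor_two_pow_mul_div :
    Tendsto (fun N : ℕ => (⌊2 ^ N * x⌋ : ℝ) / 2 ^ N) atTop (𝓝 x) := by
  have hlower : Tendsto (fun N : ℕ => x - (1 / 2) ^ N) atTop (𝓝 x) := by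
    simpa using (tendsto_pow_atTop_nhds_zero_of_lt_one (by norm_num : (0 : ℝ) ≤ 1 / 2)
      (by norm_num)).const_sub x
  refine tendsto_of_tendsto_of_tendsto_of_le_of_le hlower tendsto_const_nhds (fun N => ?_)
    (fun N => ?_)
  · rw [le_div_iff₀ (by positivity), one_div_pow, sub_mul, one_div_mul_cancel (by positivity)]
    linarith [Int.lt_floor_add_one (2 ^ N * x), mul_comm x ((2 : ℝ) ^ N)]
  · rw [div_le_iff₀ (by positivity), mul_comm]
    exact Int.floor_le _

lemma hasSum_epsBit_succ :
    HasSum (fun d : ℕ => epsBit (d + 1) x / 2 ^ (d + 1)) (Int.fract x) := by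
  rw [hasSum_iff_tendsto_nat_of_nonneg (fun d => by have := epsBit_nonneg x (d + 1); positivity)]
  simp only [sum_range_epsBit_succ]
  exact (tendsto_floor_two_pow_mul_div x).sub_const _

lemma epsBit_eq_one_of_le_of_lt {d : ℕ} (hd : 1 ≤ d) (hlo : 1 - 1 / 2 ^ d ≤ x) (hhi : x < 1) :
    epsBit d x = 1 := by
  have hfloor : ⌊(2 : ℝ) ^ d * x⌋ = 2 ^ d - 1 := by
    have hpos : (0 : ℝ) < 2 ^ d := by positivity
    rw [Int.floor_eq_iff]
    push_cast
    constructor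
    · have := mul_le_mul_of_nonneg_left hlo hpos.le
      rwa [mul_sub, mul_one, mul_one_div_cancel hpos.ne'] at this
    · nlinarith
  have hodd : ((2 : ℤ) ^ d - 1) % 2 = 1 := by
    have : (2 : ℤ) ∣ 2 ^ d := dvd_pow_self 2 (by omega)
    omega
  simp [epsBit, hfloor, hodd]

lemma epsBit_eq_one_of_one_sub_two_div_lt {a d : ℕ} (hd : 1 ≤ d) (hda : d < a)
    (hlo : 1 - 2 / 2 ^ a < x) (hhi : x < 1) : epsBit d x = 1 := by
  refine epsBit_eq_one_of_le_of_lt x hd (le_trans ?_ hlo.le) hhi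
  have : (2 : ℝ) ^ (d + 1) ≤ 2 ^ a := pow_le_pow_right₀ one_le_two hda
  rw [sub_le_sub_iff_left, div_le_div_iff₀ (by positivity) (by positivity)]
  linarith [pow_succ (2 : ℝ) d]

lemma hasSum_nu_succ :
    HasSum (fun d : ℕ => ((d : ℝ) + 1) * epsBit (d + 1) x / 2 ^ (d + 1)) (nu x) := by
  have hsummable : Summable (fun d : ℕ => (d : ℝ) * epsBit d x / 2 ^ d) := by
    refine Summable.of_nonneg_of_le (fun d => ?_) (fun d => ?_)
      (hasSum_coe_mul_geometric_of_norm_lt_one (𝕜 := ℝ) (r := 1 / 2) (by norm_num)).summable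
    · have := epsBit_nonneg x d; positivity
    · rw [one_div_pow, mul_one_div]
      gcongr
      exact mul_le_of_le_one_right (Nat.cast_nonneg d) (epsBit_le_one x d)
  have h := hsummable.hasSum
  rw [← hasSum_nat_add_iff' 1] at h
  simpa [nu] using h

lemma nu_le_of_epsBit_eq_one (a : ℕ) (hbits : ∀ d, 1 ≤ d → d < a → epsBit d x = 1) :
    nu x ≤ 2 - a * (1 - Int.fract x) := by
  have hmissing := (hasSum_one_div_two_pow_succ.sub (hasSum_epsBit_succ x)).mul_left (a : ℝ)
  refine hasSum_le (fun d => ?_) (hasSum_nu_succ x) (hasSum_succ_div_two_pow_succ.sub hmissing)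
  rw [← sub_div, mul_div_assoc', ← sub_div]
  gcongr
  suffices a * (1 - epsBit (d + 1) x) ≤ (d + 1) * (1 - epsBit (d + 1) x) by linarith
  by_cases hd : d + 1 < a
  · simp [hbits (d + 1) (by omega) hd]
  · have : (a : ℝ) ≤ d + 1 := by exact_mod_cast not_lt.mp hd
    exact mul_le_mul_of_nonneg_right this (by linarith [epsBit_le_one x (d + 1)])

end BinaryDigits

lemma one_sub_div_log_two_lt_logb_two_one_div {x : ℝ} (hx0 : 0 < x) (hx1 : x ≠ 1) :
    (1 - x) / Real.log 2 < Real.logb 2 (1 / x) := by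
  rw [Real.logb, one_div, Real.log_inv]
  exact div_lt_div_of_pos_right (by linarith [Real.log_lt_sub_one_of_pos hx0 hx1])
    (Real.log_pos one_lt_two)

theorem relative_toll_linear_bound (a : ℕ) (ha : 2 ≤ a) :
    ∀ x : ℝ, 1 - 2 / 2 ^ a < x → x ≤ 1 - 1 / 2 ^ a →
      (nu x - x * Real.logb 2 (1 / x)) / x
        < 2 - (1 - x) * ((a : ℝ) - 2 + 1 / Real.log 2) := by
  intro x hlo hhi
  have ha' : (2 : ℝ) ≤ a := by exact_mod_cast ha
  have hpow : (4 : ℝ) ≤ 2 ^ a := by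
    calc (4 : ℝ) = 2 ^ 2 := by norm_num
      _ ≤ 2 ^ a := pow_le_pow_right₀ one_le_two ha
  have hx0 : 0 < x := by
    have : (2 : ℝ) / 2 ^ a ≤ 1 / 2 := by rw [div_le_div_iff₀ (by positivity) two_pos]; linarith
    linarith
  have hx1 : x < 1 := by linarith [show (0 : ℝ) < 1 / 2 ^ a by positivity]
  have hnu := nu_le_of_epsBit_eq_one x a
    fun d hd hda => epsBit_eq_one_of_one_sub_two_div_lt x hd hda hlo hx1
  rw [Int.fract_eq_self.2 ⟨hx0.le, hx1⟩] at hnu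
  have hentropy := mul_lt_mul_of_pos_left (one_sub_div_log_two_lt_logb_two_one_div hx0 hx1.ne) hx0
  rw [div_eq_mul_one_div (1 - x)] at hentropy
  rw [div_lt_iff₀ hx0]
  linarith [mul_nonneg (sq_nonneg (1 - x)) (sub_nonneg.2 ha')]
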